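/- Let K be a power of 2, M ≥ 1, and let π_k = exp(i·2πk/K) for k ∈ {1,…,K}. Let a : {1,…,M}×{1,…,K} → ℝ, and define the softmax weights p_{j,k} = e^{a_{j,k}} / Σ_{j'=1}^M Σ_{k'=1}^K e^{a_{j',k'}}. Fix j₀ ∈ {1,…,M}, and suppose there exists (j*,k*) ≠ (j₀,K) with a_{j₀,K} ≤ a_{j*,k*}. Then |Σ_{k=1}^K π_k·p_{j₀,k} − 1|² ≥ h(K), where h(K) = 1/4 for K ∈ {1,2,4} and h(K) = sin⁴(π/K) for K ≥ 8. -/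

import Mathlib

/-!
Let `S = ∑ π_k p_{j₀,k}` and `q = p_{j₀,K}`. Since `a_{j₀,K}` is tied or beaten by a second
score, the softmax gives `q ≤ 1/2`, and the row `j₀` carries total weight at most `1`. Every
symbol other than `π_K = 1` has real part at most `c`, so `Re S ≤ q + c (1 - q)` and
`|S - 1| ≥ 1 - Re S ≥ (1 - q)(1 - c) ≥ (1 - c)/2`. For `K ≥ 8` take `c = cos (2π/K)`,
for which `(1 - c)/2 = sin² (π/K)`; for `K ≤ 4` take `c = 0`.
-/

open Finset

noncomputable section

/-- The `k`-th symbol of the K-PSK constellation, `π_k = exp(i·2πk/K)`. -/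
def psk (K k : ℕ) : ℂ := Complex.exp (2 * (Real.pi : ℂ) * Complex.I * (k : ℂ) / (K : ℂ))

def softmax {ι : Type*} (s : Finset ι) (f : ι → ℝ) (i : ι) : ℝ :=
  Real.exp (f i) / ∑ j ∈ s, Real.exp (f j)

section Softmax

variable {ι : Type*}

theorem softmax_nonneg (s : Finset ι) (f : ι → ℝ) (i : ι) : 0 ≤ softmax s f i :=
  div_nonneg (Real.exp_pos _).le (sum_nonneg fun _ _ => (Real.exp_pos _).le)

theorem sum_softmax_le_one (s : Finset ι) (f : ι → ℝ) : ∑ i ∈ s, softmax s f i ≤ 1 := by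
  simp only [softmax, ← sum_div]
  exact div_le_one_of_le₀ le_rfl (sum_nonneg fun _ _ => (Real.exp_pos _).le)

theorem sum_softmax_product_le_one {α : Type*} [Fintype α] (t : Finset ι) (f : α × ι → ℝ)
    (a : α) : ∑ i ∈ t, softmax (univ ×ˢ t) f (a, i) ≤ 1 :=
  calc ∑ i ∈ t, softmax (univ ×ˢ t) f (a, i)
      ≤ ∑ b, ∑ i ∈ t, softmax (univ ×ˢ t) f (b, i) :=
        single_le_sum (fun b _ => sum_nonneg fun i _ => softmax_nonneg ..) (mem_univ a)
    _ ≤ 1 := by simpa only [← sum_product] using sum_softmax_le_one (univ ×ˢ t) f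

theorem softmax_le_half [DecidableEq ι] {s : Finset ι} {f : ι → ℝ} {i j : ι} (hi : i ∈ s)
    (hj : j ∈ s) (hij : i ≠ j) (hf : f i ≤ f j) : softmax s f i ≤ 1 / 2 := by
  have hpair : Real.exp (f i) + Real.exp (f j) ≤ ∑ k ∈ s, Real.exp (f k) := by
    rw [← sum_pair (f := fun k => Real.exp (f k)) hij]
    exact sum_le_sum_of_subset_of_nonneg (insert_subset hi (singleton_subset_iff.mpr hj))
      fun _ _ _ => (Real.exp_pos _).le
  have hexp : Real.exp (f i) ≤ Real.exp (f j) := Real.exp_le_exp.mpr hf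
  rw [softmax, div_le_iff₀ ((Real.exp_pos _).trans_le (single_le_sum
    (fun _ _ => (Real.exp_pos _).le) hi))]
  linarith

end Softmax

section WeightedMean

variable {ι : Type*} [DecidableEq ι] {s : Finset ι} {t : ι} {z : ι → ℂ} {w : ι → ℝ}
  {c : ℝ}

theorem re_sum_mul_le (ht : t ∈ s) (hzt : z t = 1) (hw : ∀ i ∈ s, 0 ≤ w i)
    (hsum : ∑ i ∈ s, w i ≤ 1) (hc0 : 0 ≤ c) (hc : ∀ i ∈ s, i ≠ t → (z i).re ≤ c) :
    (∑ i ∈ s, z i * w i).re ≤ w t + c * (1 - w t) := by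
  have hrest : ∑ i ∈ s.erase t, (z i).re * w i ≤ c * ∑ i ∈ s.erase t, w i := by
    rw [mul_sum]
    exact sum_le_sum fun i hi => mul_le_mul_of_nonneg_right
      (hc i (mem_of_mem_erase hi) (ne_of_mem_erase hi)) (hw i (mem_of_mem_erase hi))
  have hsplit (g : ι → ℝ) : ∑ i ∈ s, g i = g t + ∑ i ∈ s.erase t, g i :=
    (add_sum_erase s g ht).symm
  simp only [Complex.re_sum, Complex.re_mul_ofReal]
  rw [hsplit, hzt, Complex.one_re, one_mul]
  have := hsplit w
  nlinarith

theorem sq_one_sub_div_two_le_norm_sum_mul_sub_one_sq (ht : t ∈ s) (hzt : z t = 1)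
    (hw : ∀ i ∈ s, 0 ≤ w i) (hsum : ∑ i ∈ s, w i ≤ 1) (hwt : w t ≤ 1 / 2)
    (hc0 : 0 ≤ c) (hc1 : c ≤ 1) (hc : ∀ i ∈ s, i ≠ t → (z i).re ≤ c) :
    ((1 - c) / 2) ^ 2 ≤ ‖∑ i ∈ s, z i * w i - 1‖ ^ 2 := by
  have hre := re_sum_mul_le ht hzt hw hsum hc0 hc
  have hgap : (1 - c) / 2 ≤ (1 - ∑ i ∈ s, z i * w i).re := by
    rw [Complex.sub_re, Complex.one_re]
    nlinarith
  rw [← norm_neg, neg_sub]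
  exact pow_le_pow_left₀ (by linarith) (hgap.trans ((le_abs_self _).trans
    (Complex.abs_re_le_norm _))) 2

end WeightedMean

namespace Real

theorem cos_le_cos_of_mem_Icc {θ x : ℝ} (hθ0 : 0 ≤ θ) (hx : θ ≤ x)
    (hx' : x ≤ 2 * π - θ) : cos x ≤ cos θ := by
  rcases le_total x π with hxπ | hπx
  · exact cos_le_cos_of_nonneg_of_le_pi hθ0 hxπ hx
  · rw [← cos_two_pi_sub]
    exact cos_le_cos_of_nonneg_of_le_pi hθ0 (by linarith) (by linarith)

theorem sq_one_sub_cos_two_mul_div_two (x : ℝ) : ((1 - cos (2 * x)) / 2) ^ 2 = sin x ^ 4 := by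
  rw [cos_two_mul, cos_sq']
  ring

end Real

theorem psk_re (K k : ℕ) : (psk K k).re = Real.cos (2 * Real.pi * k / K) := by
  rw [psk, show 2 * (Real.pi : ℂ) * Complex.I * k / K
      = ((2 * Real.pi * k / K : ℝ) : ℂ) * Complex.I by push_cast; ring,
    Complex.exp_ofReal_mul_I_re]

theorem psk_self {K : ℕ} (hK : K ≠ 0) : psk K K = 1 := by
  rw [psk, mul_div_cancel_right₀ _ (Nat.cast_ne_zero.mpr hK), Complex.exp_two_pi_mul_I]

theorem psk_re_le_cos {K k : ℕ} (hk : 1 ≤ k) (hkK : k < K) :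
    (psk K k).re ≤ Real.cos (2 * Real.pi / K) := by
  have hK : (2 : ℝ) ≤ K := by exact_mod_cast (by omega : 2 ≤ K)
  have hk' : (1 : ℝ) ≤ k := by exact_mod_cast hk
  have hkK' : (k : ℝ) + 1 ≤ K := by exact_mod_cast hkK
  have hKpos : (0 : ℝ) < K := by linarith
  rw [psk_re]
  apply Real.cos_le_cos_of_mem_Icc (by positivity)
  · rw [div_le_div_iff_of_pos_right hKpos]; nlinarith [Real.pi_pos]
  · rw [le_sub_iff_add_le, ← add_div, div_le_iff₀ hKpos]; nlinarith [Real.pi_pos]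

theorem psk_re_nonpos {K k : ℕ} (hK : K ≤ 4) (hk : 1 ≤ k) (hkK : k < K) :
    (psk K k).re ≤ 0 := by
  have hK2 : (2 : ℝ) ≤ K := by exact_mod_cast (by omega : 2 ≤ K)
  have hK4 : (K : ℝ) ≤ 4 := by exact_mod_cast hK
  have hKpos : (0 : ℝ) < K := by linarith
  refine (psk_re_le_cos hk hkK).trans (Real.cos_nonpos_of_pi_div_two_le_of_le ?_ ?_)
  · rw [le_div_iff₀ hKpos]; nlinarith [Real.pi_pos]
  · rw [div_le_iff₀ hKpos]; nlinarith [Real.pi_pos]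

theorem cos_two_pi_div_nonneg {K : ℕ} (hK : 4 ≤ K) : 0 ≤ Real.cos (2 * Real.pi / K) := by
  have hK4 : (4 : ℝ) ≤ K := by exact_mod_cast hK
  have hθ : 0 ≤ 2 * Real.pi / K := by positivity
  refine Real.cos_nonneg_of_mem_Icc ⟨by linarith [Real.pi_pos], ?_⟩
  rw [div_le_iff₀ (by linarith)]; nlinarith [Real.pi_pos]

theorem softmax_section_error_bound_general (K : ℕ)
    (M : ℕ) (a : Fin M → ℕ → ℝ) (j0 : Fin M)
    (p : Fin M → ℕ → ℝ)
    (hp : ∀ j k, p j k =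
      Real.exp (a j k) / ∑ j' : Fin M, ∑ k' ∈ Finset.Icc 1 K, Real.exp (a j' k'))
    (hdom : ∃ js : Fin M, ∃ ks ∈ Finset.Icc 1 K,
      (js, ks) ≠ (j0, K) ∧ a j0 K ≤ a js ks) :
    ((K = 1 ∨ K = 2 ∨ K = 4) →
        (1 : ℝ) / 4 ≤ ‖(∑ k ∈ Finset.Icc 1 K, psk K k * (p j0 k : ℂ)) - 1‖ ^ 2) ∧
    (8 ≤ K →
        Real.sin (Real.pi / K) ^ 4
          ≤ ‖(∑ k ∈ Finset.Icc 1 K, psk K k * (p j0 k : ℂ)) - 1‖ ^ 2) := by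
  obtain ⟨js, ks, hks, hne, hle⟩ := hdom
  set s := (univ : Finset (Fin M)) ×ˢ Icc 1 K
  have hsoftmax (j : Fin M) (k : ℕ) : p j k = softmax s (fun x => a x.1 x.2) (j, k) := by
    rw [hp, softmax, sum_product]
  have hK1 : 1 ≤ K := (mem_Icc.mp hks).1.trans (mem_Icc.mp hks).2
  have hK : K ∈ Icc 1 K := mem_Icc.mpr ⟨hK1, le_rfl⟩
  have htop : p j0 K ≤ 1 / 2 := hsoftmax j0 K ▸
    softmax_le_half (mem_product.mpr ⟨mem_univ _, hK⟩) (mem_product.mpr ⟨mem_univ _, hks⟩)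
      hne.symm hle
  have hrow : ∑ k ∈ Icc 1 K, p j0 k ≤ 1 := by
    simpa only [hsoftmax] using sum_softmax_product_le_one _ _ j0
  have hbound (c : ℝ) (hc0 : 0 ≤ c) (hc1 : c ≤ 1)
      (hc : ∀ k, 1 ≤ k → k < K → (psk K k).re ≤ c) :
      ((1 - c) / 2) ^ 2 ≤ ‖(∑ k ∈ Icc 1 K, psk K k * (p j0 k : ℂ)) - 1‖ ^ 2 :=
    sq_one_sub_div_two_le_norm_sum_mul_sub_one_sq hK (psk_self (by omega))
      (fun k _ => hsoftmax j0 k ▸ softmax_nonneg ..) hrow htop hc0 hc1 fun k hk hkK =>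
        hc k (mem_Icc.mp hk).1 (lt_of_le_of_ne (mem_Icc.mp hk).2 hkK)
  constructor
  · intro hKsmall
    calc (1 : ℝ) / 4 = ((1 - 0) / 2) ^ 2 := by norm_num
      _ ≤ _ := hbound 0 le_rfl zero_le_one fun k => psk_re_nonpos (by omega)
  · intro hK8
    rw [← Real.sq_one_sub_cos_two_mul_div_two, mul_div_assoc']
    exact hbound _ (cos_two_pi_div_nonneg (by omega)) (Real.cos_le_one _) fun k => psk_re_le_cos

/-- **Softmax posterior-mean error bound.** Let `K` be a power of 2, `M ≥ 1`, and let
`p_{j,k}` be the softmax weights of scores `a_{j,k}`, `(j,k) ∈ {1,…,M}×{1,…,K}`. If the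
transmitted pair `(j₀, K)` (symbol `π_K = 1`) does not strictly dominate all other pairs,
i.e. `a_{j₀,K} ≤ a_{j*,k*}` for some `(j*,k*) ≠ (j₀,K)`, then
`|∑_k π_k p_{j₀,k} − 1|² ≥ h(K)` with `h(K) = 1/4` for `K ∈ {1,2,4}` and
`h(K) = sin⁴(π/K)` for `K ≥ 8`. -/
theorem softmax_section_error_bound (K : ℕ) (hK : ∃ m : ℕ, K = 2 ^ m)
    (M : ℕ) (hM : 1 ≤ M) (a : Fin M → ℕ → ℝ) (j0 : Fin M)
    (p : Fin M → ℕ → ℝ)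
    (hp : ∀ j k, p j k =
      Real.exp (a j k) / ∑ j' : Fin M, ∑ k' ∈ Finset.Icc 1 K, Real.exp (a j' k'))
    (hdom : ∃ js : Fin M, ∃ ks ∈ Finset.Icc 1 K,
      (js, ks) ≠ (j0, K) ∧ a j0 K ≤ a js ks) :
    ((K = 1 ∨ K = 2 ∨ K = 4) →
        (1 : ℝ) / 4 ≤ ‖(∑ k ∈ Finset.Icc 1 K, psk K k * (p j0 k : ℂ)) - 1‖ ^ 2) ∧
    (8 ≤ K →
        Real.sin (Real.pi / K) ^ 4
          ≤ ‖(∑ k ∈ Finset.Icc 1 K, psk K k * (p j0 k : ℂ)) - 1‖ ^ 2) :=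
  softmax_section_error_bound_general K M a j0 p hp hdom
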